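/- arXiv:1405.5739 — 4 statements merged into one kernel-verified Lean document; each statement's English description precedes it below -/
import Mathlib

section
/- There exists ϑ₀ ∈ (0,1) such that for every ϑ ∈ (0,ϑ₀) there exist a smooth function φ : ℝ → ℝ, a real number α ∈ (1,2) and a constant c ∈ (0,1) with the following properties: (i) φ(t) ≥ 0 for all t, φ(0) = 0, φ'(0) = 0, φ''(0) = 1, lim_{t→0⁺} φ'(t)/t = 1, and φ'(t) > 0 for every t > 0 (so 0 is the unique critical point of φ in [0,∞)); (ii) the function t ↦ φ'(t)/t is strictly decreasing on (0,∞) and lim_{t→+∞} φ'(t)/t exists and is strictly less than ϑ; (iii) φ(t) = c·t^α for every t > 0 such that φ'(t)/t ∈ [ϑ, 1−ϑ]. -/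
/-!
Take `β = ϑ / 4` and the smooth function `S x = x + expNegInvGlue (1 - x)` (`smoothedId`), which
is positive on `[0, ∞)`, equals `e⁻¹` at `0` and equals `x` for `x ≥ 1`. Put
`F x = x * S x ^ (-β)` (`smoothedRpow β`) and `φ t = e^{-β} / 2 * F (t²)` (`profile β`). Then
`φ' t / t = e^{-β} F' (t²)` (`profileRatio β (t²)`): it is `1` at `t = 0`, and
`φ t = e^{-β} / 2 * t ^ (2 - 2β)` for `t ≥ 1`, so that the ratio decays like `t^{-2β}` there.
The ratio is strictly decreasing because `F` is strictly concave on `[0, ∞)`: on `(0, 1)`,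
`F'' = -β S^{-β-2} (2 S S' + x S S'' - (1 + β) x S'^2)`, and the bracket is positive since the
bounds `e^{-1/y} ≤ 4 e^{-2} y²` and `(1 - 2y) / y⁴ ≥ -27/16` keep `S'` in `[9/20, 1]` and `S''`
above `-27/16 (S - x)`. Finally the ratio at `t = 1` is `e^{-β} (1 - β) > 1 - ϑ`, so it lies
in `[ϑ, 1 - ϑ]` only for `t > 1`, where `φ` is a pure power.
-/

open Set Filter Real Topology

theorem expNegInvGlue.eq_exp_of_pos {y : ℝ} (hy : 0 < y) : expNegInvGlue y = exp (-y⁻¹) := by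
  simp [expNegInvGlue, hy.not_ge]

theorem expNegInvGlue.le_exp_neg_one {y : ℝ} (hy : y ≤ 1) : expNegInvGlue y ≤ exp (-1) := by
  rcases le_or_gt y 0 with h | h
  · rw [expNegInvGlue.zero_of_nonpos h]; positivity
  · rw [expNegInvGlue.eq_exp_of_pos h, exp_le_exp, neg_le_neg_iff]
    exact (one_le_inv₀ h).2 hy

theorem expNegInvGlue.le_four_div_exp_two_mul_sq (y : ℝ) :
    expNegInvGlue y ≤ 4 / exp 2 * y ^ 2 := by
  rcases le_or_gt y 0 with h | h
  · rw [expNegInvGlue.zero_of_nonpos h]; positivity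
  · have key : exp 2 * (2 * y)⁻¹ ^ 2 ≤ exp y⁻¹ := by
      calc exp 2 * (2 * y)⁻¹ ^ 2 = (exp 1 * (2 * y)⁻¹) ^ 2 := by
            rw [mul_pow, ← exp_nat_mul]; norm_num
        _ ≤ exp (2 * y)⁻¹ ^ 2 := by gcongr; exact exp_one_mul_le_exp
        _ = exp y⁻¹ := by rw [← exp_nat_mul]; congr 1; field_simp; norm_num
    rw [expNegInvGlue.eq_exp_of_pos h, exp_neg, inv_le_iff_one_le_mul₀ (exp_pos _)]
    calc 1 = exp 2 * (2 * y)⁻¹ ^ 2 * (4 / exp 2 * y ^ 2) := by field_simp; ring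
      _ ≤ exp y⁻¹ * (4 / exp 2 * y ^ 2) := by gcongr
      _ = _ := mul_comm _ _

theorem four_div_exp_two_lt : 4 / exp 2 < 11 / 20 := by
  have h : (80 / 11 : ℝ) < exp 1 * exp 1 := by nlinarith [exp_one_gt_d9]
  rw [div_lt_iff₀ (exp_pos 2), show (2 : ℝ) = 1 + 1 by norm_num, exp_add]
  linarith

theorem expNegInvGlue.hasDerivAt_of_pos {y : ℝ} (hy : 0 < y) :
    HasDerivAt expNegInvGlue (expNegInvGlue y / y ^ 2) y := by
  have h : HasDerivAt (fun y : ℝ => exp (-y⁻¹)) (exp (-y⁻¹) * -(-(y ^ 2)⁻¹)) y :=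
    ((hasDerivAt_inv hy.ne').neg).exp
  refine (h.congr_of_eventuallyEq ?_).congr_deriv ?_
  · filter_upwards [lt_mem_nhds hy] with z hz using expNegInvGlue.eq_exp_of_pos hz
  · rw [expNegInvGlue.eq_exp_of_pos hy]; ring

theorem expNegInvGlue.hasDerivAt_div_sq {y : ℝ} (hy : 0 < y) :
    HasDerivAt (fun y => expNegInvGlue y / y ^ 2)
      (expNegInvGlue y * (1 - 2 * y) / y ^ 4) y := by
  refine ((expNegInvGlue.hasDerivAt_of_pos hy).div (hasDerivAt_pow 2 y)
    (by positivity)).congr_deriv ?_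
  field_simp
  ring

theorem neg_le_one_sub_two_mul_div_pow_four {y : ℝ} (hy : 0 < y) :
    -(27 / 16) ≤ (1 - 2 * y) / y ^ 4 := by
  rw [le_div_iff₀ (by positivity)]
  nlinarith [mul_nonneg (sq_nonneg (3 * y - 2))
    (by positivity : (0 : ℝ) ≤ 3 * y ^ 2 + 4 * y + 4)]

theorem hasDerivAt_mul_rpow_neg {S : ℝ → ℝ} {s' x β : ℝ} (hS : HasDerivAt S s' x)
    (hpos : 0 < S x) :
    HasDerivAt (fun y => y * S y ^ (-β)) (S x ^ (-β - 1) * (S x - β * x * s')) x := by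
  refine ((hasDerivAt_id x).mul (hS.rpow_const (Or.inl hpos.ne'))).congr_deriv ?_
  rw [show S x ^ (-β) = S x ^ (-β - 1) * S x by
    rw [← rpow_add_one hpos.ne']; ring_nf]
  simp only [id]
  ring

theorem hasDerivAt_rpow_mul_sub {S S' : ℝ → ℝ} {s'' x β : ℝ} (hS : HasDerivAt S (S' x) x)
    (hS' : HasDerivAt S' s'' x) (hpos : 0 < S x) :
    HasDerivAt (fun y => S y ^ (-β - 1) * (S y - β * y * S' y))
      (-β * S x ^ (-β - 2) * (2 * S x * S' x + x * S x * s'' - (1 + β) * x * S' x ^ 2)) x := by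
  refine ((hS.rpow_const (Or.inl hpos.ne')).mul
    (hS.sub (((hasDerivAt_id x).const_mul β).mul hS'))).congr_deriv ?_
  rw [show S x ^ (-β - 1) = S x ^ (-β - 2) * S x by
    rw [← rpow_add_one hpos.ne']; ring_nf, show (-β - 1 - 1) = -β - 2 by ring]
  simp only [id, Pi.sub_apply, Pi.mul_apply]
  ring

theorem concavity_form_pos {β x s s' s'' : ℝ} (hβ0 : 0 ≤ β) (hβ : β ≤ 1 / 8) (hx : 0 < x)
    (hxs : x < s) (hs : s ≤ x + 2 / 5) (hs'0 : 9 / 20 ≤ s') (hs'1 : s' ≤ 1)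
    (hs'' : -(27 / 16) * (s - x) ≤ s'') (hs''_nonneg : 1 / 2 ≤ x → 0 ≤ s'') :
    0 < 2 * s * s' + x * s * s'' - (1 + β) * x * s' ^ 2 := by
  have hs'pos : 0 < s' := by linarith
  have hxspos : 0 < x * s := mul_pos hx (hx.trans hxs)
  have hneg : (1 + β) * x * s' ^ 2 ≤ 9 / 8 * x * s' := by
    have : (1 + β) * s' ≤ 9 / 8 := by nlinarith
    nlinarith [mul_pos hx hs'pos]
  rcases le_or_gt (1 / 2) x with hx2 | hx2
  · nlinarith [mul_nonneg hxspos.le (hs''_nonneg hx2), mul_pos hx hs'pos]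
  · have hxs9 : x * s ≤ 9 / 20 := by nlinarith
    have hcurv : -(243 / 320) * (s - x) ≤ x * s * s'' := by
      nlinarith [mul_nonneg hxspos.le (by linarith : 0 ≤ s'' + 27 / 16 * (s - x)),
        mul_nonneg (sub_nonneg.2 hxs9) (by linarith : (0 : ℝ) ≤ s - x)]
    nlinarith [mul_nonneg (by linarith : (0 : ℝ) ≤ 2 * s - 9 / 8 * x)
      (by linarith : (0 : ℝ) ≤ s' - 9 / 20)]

namespace ProfileFunction

noncomputable def smoothedId (x : ℝ) : ℝ := x + expNegInvGlue (1 - x)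

noncomputable def smoothedIdDeriv (x : ℝ) : ℝ := 1 - expNegInvGlue (1 - x) / (1 - x) ^ 2

theorem smoothedId_of_one_le {x : ℝ} (hx : 1 ≤ x) : smoothedId x = x := by
  rw [smoothedId, expNegInvGlue.zero_of_nonpos (by linarith), add_zero]

theorem smoothedId_zero : smoothedId 0 = exp (-1) := by
  rw [smoothedId, sub_zero, expNegInvGlue.eq_exp_of_pos one_pos, inv_one, zero_add]

theorem lt_smoothedId {x : ℝ} (hx : x < 1) : x < smoothedId x :=
  lt_add_of_pos_right x (expNegInvGlue.pos_of_pos (by linarith))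

theorem smoothedId_pos {x : ℝ} (hx : 0 ≤ x) : 0 < smoothedId x := by
  rcases lt_or_ge x 1 with h | h
  · exact hx.trans_lt (lt_smoothedId h)
  · rw [smoothedId_of_one_le h]; linarith

theorem contDiff_smoothedId : ContDiff ℝ (⊤ : ℕ∞) smoothedId :=
  contDiff_id.add (expNegInvGlue.contDiff.comp (contDiff_const.sub contDiff_id))

theorem hasDerivAt_smoothedId {x : ℝ} (hx : x < 1) :
    HasDerivAt smoothedId (smoothedIdDeriv x) x := by
  have h := (expNegInvGlue.hasDerivAt_of_pos (sub_pos.2 hx)).comp x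
    ((hasDerivAt_id x).const_sub 1)
  exact ((hasDerivAt_id x).add h).congr_deriv (by simp [smoothedIdDeriv]; ring)

theorem hasDerivAt_smoothedIdDeriv {x : ℝ} (hx : x < 1) :
    HasDerivAt smoothedIdDeriv
      (expNegInvGlue (1 - x) * (1 - 2 * (1 - x)) / (1 - x) ^ 4) x := by
  have h := (expNegInvGlue.hasDerivAt_div_sq (sub_pos.2 hx)).comp x
    ((hasDerivAt_id x).const_sub 1)
  exact (h.const_sub 1).congr_deriv (by simp)

theorem smoothedIdDeriv_le_one (x : ℝ) : smoothedIdDeriv x ≤ 1 :=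
  sub_le_self _ (div_nonneg (expNegInvGlue.nonneg _) (sq_nonneg _))

theorem nine_div_twenty_le_smoothedIdDeriv {x : ℝ} (hx : x < 1) :
    9 / 20 ≤ smoothedIdDeriv x := by
  have h : expNegInvGlue (1 - x) / (1 - x) ^ 2 ≤ 4 / exp 2 := by
    rw [div_le_iff₀ (by nlinarith)]; exact expNegInvGlue.le_four_div_exp_two_mul_sq _
  rw [smoothedIdDeriv]; linarith [four_div_exp_two_lt]

noncomputable def smoothedRpow (β x : ℝ) : ℝ := x * smoothedId x ^ (-β)

theorem smoothedRpow_of_one_le (β : ℝ) {x : ℝ} (hx : 1 ≤ x) :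
    smoothedRpow β x = x ^ (1 - β) := by
  rw [smoothedRpow, smoothedId_of_one_le hx, sub_eq_add_neg, rpow_add (by linarith), rpow_one]

theorem contDiffAt_smoothedRpow (β : ℝ) {x : ℝ} (hx : 0 < smoothedId x) :
    ContDiffAt ℝ (⊤ : ℕ∞) (smoothedRpow β) x :=
  contDiffAt_id.mul (contDiff_smoothedId.contDiffAt.rpow_const_of_ne hx.ne')

theorem contDiffAt_deriv_smoothedRpow (β : ℝ) {x : ℝ} (hx : 0 ≤ x) :
    ContDiffAt ℝ (⊤ : ℕ∞) (deriv (smoothedRpow β)) x := by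
  have hU : IsOpen {x | 0 < smoothedId x} :=
    isOpen_lt continuous_const contDiff_smoothedId.continuous
  have hf : ContDiffOn ℝ (⊤ : ℕ∞) (smoothedRpow β) {x | 0 < smoothedId x} := fun _ hy =>
    (contDiffAt_smoothedRpow β hy).contDiffWithinAt
  exact (hf.deriv_of_isOpen hU le_rfl).contDiffAt (hU.mem_nhds (smoothedId_pos hx))

theorem deriv_smoothedRpow_of_lt_one (β : ℝ) {x : ℝ} (hx0 : 0 ≤ x) (hx1 : x < 1) :
    deriv (smoothedRpow β) x =
      smoothedId x ^ (-β - 1) * (smoothedId x - β * x * smoothedIdDeriv x) :=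
  (hasDerivAt_mul_rpow_neg (hasDerivAt_smoothedId hx1) (smoothedId_pos hx0)).deriv

theorem deriv_smoothedRpow_zero (β : ℝ) : deriv (smoothedRpow β) 0 = exp β := by
  rw [deriv_smoothedRpow_of_lt_one β le_rfl one_pos, smoothedId_zero, mul_zero, zero_mul,
    sub_zero, ← rpow_add_one (exp_pos _).ne', ← exp_mul]
  ring_nf

theorem deriv_smoothedRpow_of_one_le (β : ℝ) {x : ℝ} (hx : 1 ≤ x) :
    deriv (smoothedRpow β) x = (1 - β) * x ^ (-β) := by
  have hunique : UniqueDiffWithinAt ℝ (Ici 1) x := uniqueDiffOn_Ici 1 x hx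
  have h : HasDerivWithinAt (smoothedRpow β) ((1 - β) * x ^ (-β)) (Ici 1) x := by
    refine ((hasDerivAt_rpow_const (Or.inl (by positivity))).hasDerivWithinAt.congr
      (fun y hy => smoothedRpow_of_one_le β hy) (smoothedRpow_of_one_le β hx)).congr_deriv ?_
    ring_nf
  have hdiff : DifferentiableAt ℝ (smoothedRpow β) x :=
    (contDiffAt_smoothedRpow β (smoothedId_pos (by linarith))).differentiableAt (by simp)
  rw [← h.derivWithin hunique, hdiff.derivWithin hunique]

theorem hasDerivAt_deriv_smoothedRpow (β : ℝ) {x : ℝ} (hx0 : 0 < x) (hx1 : x < 1) :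
    HasDerivAt (deriv (smoothedRpow β))
      (-β * smoothedId x ^ (-β - 2) * (2 * smoothedId x * smoothedIdDeriv x +
        x * smoothedId x * (expNegInvGlue (1 - x) * (1 - 2 * (1 - x)) / (1 - x) ^ 4) -
        (1 + β) * x * smoothedIdDeriv x ^ 2)) x := by
  refine (hasDerivAt_rpow_mul_sub (hasDerivAt_smoothedId hx1) (hasDerivAt_smoothedIdDeriv hx1)
    (smoothedId_pos hx0.le)).congr_of_eventuallyEq ?_
  filter_upwards [Ioo_mem_nhds hx0 hx1] with y hy
  exact deriv_smoothedRpow_of_lt_one β hy.1.le hy.2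

theorem deriv_deriv_smoothedRpow_neg {β x : ℝ} (hβ0 : 0 < β) (hβ : β ≤ 1 / 8) (hx0 : 0 < x)
    (hx1 : x < 1) : deriv (deriv (smoothedRpow β)) x < 0 := by
  have hy : 0 < 1 - x := sub_pos.2 hx1
  have hglue : smoothedId x - x = expNegInvGlue (1 - x) := by rw [smoothedId]; ring
  have hgap : smoothedId x ≤ x + 2 / 5 := by
    linarith [expNegInvGlue.le_exp_neg_one (y := 1 - x) (by linarith), exp_neg_one_lt_d9]
  have hcurv : -(27 / 16) * (smoothedId x - x) ≤
      expNegInvGlue (1 - x) * (1 - 2 * (1 - x)) / (1 - x) ^ 4 := by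
    rw [hglue, mul_div_assoc, mul_comm (expNegInvGlue (1 - x))]
    exact mul_le_mul_of_nonneg_right (neg_le_one_sub_two_mul_div_pow_four hy)
      (expNegInvGlue.nonneg _)
  have hcurv_nonneg (hx : 1 / 2 ≤ x) :
      0 ≤ expNegInvGlue (1 - x) * (1 - 2 * (1 - x)) / (1 - x) ^ 4 :=
    div_nonneg (mul_nonneg (expNegInvGlue.nonneg _) (by linarith)) (by positivity)
  have hbracket := concavity_form_pos hβ0.le hβ hx0 (lt_smoothedId hx1) hgap
    (nine_div_twenty_le_smoothedIdDeriv hx1) (smoothedIdDeriv_le_one x) hcurv hcurv_nonneg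
  rw [(hasDerivAt_deriv_smoothedRpow β hx0 hx1).deriv]
  have hpow := rpow_pos_of_pos (smoothedId_pos hx0.le) (-β - 2)
  exact mul_neg_of_neg_of_pos (mul_neg_of_neg_of_pos (neg_neg_of_pos hβ0) hpow) hbracket

theorem strictAntiOn_deriv_smoothedRpow {β : ℝ} (hβ0 : 0 < β) (hβ : β ≤ 1 / 8) :
    StrictAntiOn (deriv (smoothedRpow β)) (Ici 0) := by
  have hleft : StrictAntiOn (deriv (smoothedRpow β)) (Icc 0 1) := by
    refine strictAntiOn_of_deriv_neg (convex_Icc 0 1) (fun x hx => ?_) (fun x hx => ?_)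
    · exact (contDiffAt_deriv_smoothedRpow β hx.1).continuousAt.continuousWithinAt
    · rw [interior_Icc] at hx
      exact deriv_deriv_smoothedRpow_neg hβ0 hβ hx.1 hx.2
  have hright : StrictAntiOn (deriv (smoothedRpow β)) (Ici 1) := by
    intro x hx y hy hxy
    rw [deriv_smoothedRpow_of_one_le β hx, deriv_smoothedRpow_of_one_le β hy]
    exact mul_lt_mul_of_pos_left (rpow_lt_rpow_of_neg (by linarith [mem_Ici.1 hx]) hxy
      (neg_lt_zero.2 hβ0)) (by linarith)
  rw [← Icc_union_Ici_eq_Ici zero_le_one]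
  exact hleft.union hright (isGreatest_Icc zero_le_one) isLeast_Ici

theorem deriv_smoothedRpow_pos {β x : ℝ} (hβ0 : 0 < β) (hβ : β ≤ 1 / 8) (hx : 0 ≤ x) :
    0 < deriv (smoothedRpow β) x := by
  have h1 : 0 < deriv (smoothedRpow β) 1 := by
    rw [deriv_smoothedRpow_of_one_le β le_rfl, one_rpow, mul_one]; linarith
  rcases lt_or_ge x 1 with hx1 | hx1
  · exact h1.trans (strictAntiOn_deriv_smoothedRpow hβ0 hβ hx (mem_Ici.2 zero_le_one) hx1)
  · rw [deriv_smoothedRpow_of_one_le β hx1]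
    exact mul_pos (by linarith) (rpow_pos_of_pos (by linarith) _)

noncomputable def profileRatio (β x : ℝ) : ℝ := exp (-β) * deriv (smoothedRpow β) x

theorem profileRatio_zero (β : ℝ) : profileRatio β 0 = 1 := by
  rw [profileRatio, deriv_smoothedRpow_zero, ← exp_add, neg_add_cancel, exp_zero]

theorem profileRatio_of_one_le (β : ℝ) {x : ℝ} (hx : 1 ≤ x) :
    profileRatio β x = exp (-β) * (1 - β) * x ^ (-β) := by
  rw [profileRatio, deriv_smoothedRpow_of_one_le β hx, mul_assoc]

theorem contDiffAt_profileRatio (β : ℝ) {x : ℝ} (hx : 0 ≤ x) :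
    ContDiffAt ℝ (⊤ : ℕ∞) (profileRatio β) x :=
  contDiffAt_const.mul (contDiffAt_deriv_smoothedRpow β hx)

theorem strictAntiOn_profileRatio {β : ℝ} (hβ0 : 0 < β) (hβ : β ≤ 1 / 8) :
    StrictAntiOn (profileRatio β) (Ici 0) := fun _ hx _ hy hxy =>
  mul_lt_mul_of_pos_left (strictAntiOn_deriv_smoothedRpow hβ0 hβ hx hy hxy) (exp_pos _)

theorem profileRatio_pos {β x : ℝ} (hβ0 : 0 < β) (hβ : β ≤ 1 / 8) (hx : 0 ≤ x) :
    0 < profileRatio β x :=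
  mul_pos (exp_pos _) (deriv_smoothedRpow_pos hβ0 hβ hx)

theorem tendsto_profileRatio_atTop {β : ℝ} (hβ0 : 0 < β) :
    Tendsto (profileRatio β) atTop (𝓝 0) := by
  have h := (tendsto_rpow_neg_atTop hβ0).const_mul (exp (-β) * (1 - β))
  rw [mul_zero] at h
  exact h.congr' (eventually_ge_atTop 1 |>.mono fun x hx => (profileRatio_of_one_le β hx).symm)

noncomputable def profile (β t : ℝ) : ℝ := exp (-β) / 2 * smoothedRpow β (t ^ 2)

theorem contDiff_profile (β : ℝ) : ContDiff ℝ (⊤ : ℕ∞) (profile β) :=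
  contDiff_iff_contDiffAt.2 fun t => contDiffAt_const.mul
    ((contDiffAt_smoothedRpow β (smoothedId_pos (sq_nonneg t))).comp
      (f := fun t : ℝ => t ^ 2) t (contDiffAt_id.pow 2))

theorem profile_nonneg (β t : ℝ) : 0 ≤ profile β t := by
  have := rpow_pos_of_pos (smoothedId_pos (sq_nonneg t)) (-β)
  unfold profile smoothedRpow
  positivity

theorem profile_of_one_le (β : ℝ) {t : ℝ} (ht : 1 ≤ t) :
    profile β t = exp (-β) / 2 * t ^ (2 - 2 * β) := by
  rw [profile, smoothedRpow_of_one_le β (by nlinarith), ← rpow_two, ← rpow_mul (by linarith)]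
  ring_nf

theorem hasDerivAt_profile (β t : ℝ) :
    HasDerivAt (profile β) (t * profileRatio β (t ^ 2)) t := by
  have h := (contDiffAt_smoothedRpow β (smoothedId_pos (sq_nonneg t))).differentiableAt
    (by simp) |>.hasDerivAt.comp (h := fun t : ℝ => t ^ 2) t (hasDerivAt_pow 2 t)
  refine (h.const_mul (exp (-β) / 2)).congr_deriv ?_
  rw [profileRatio]
  push_cast
  ring

theorem deriv_profile_pos {β t : ℝ} (hβ0 : 0 < β) (hβ : β ≤ 1 / 8) (ht : 0 < t) :
    0 < deriv (profile β) t := by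
  rw [(hasDerivAt_profile β t).deriv]
  exact mul_pos ht (profileRatio_pos hβ0 hβ (sq_nonneg t))

theorem deriv_profile_div {β t : ℝ} (ht : t ≠ 0) :
    deriv (profile β) t / t = profileRatio β (t ^ 2) := by
  rw [(hasDerivAt_profile β t).deriv, mul_div_cancel_left₀ _ ht]

theorem deriv_deriv_profile_zero (β : ℝ) : deriv (deriv (profile β)) 0 = 1 := by
  have hratio : DifferentiableAt ℝ (profileRatio β ∘ fun t : ℝ => t ^ 2) 0 :=
    ((contDiffAt_profileRatio β (sq_nonneg 0)).differentiableAt (by simp)).comp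
      (f := fun t : ℝ => t ^ 2) 0 (differentiableAt_pow 2)
  have h := (hasDerivAt_id (0 : ℝ)).mul hratio.hasDerivAt
  rw [funext fun t => (hasDerivAt_profile β t).deriv]
  exact h.deriv.trans (by simp [profileRatio_zero])

theorem one_sub_four_mul_lt_profileRatio_one {β : ℝ} (hβ0 : 0 < β) (hβ1 : β ≤ 1) :
    1 - 4 * β < profileRatio β 1 := by
  rw [profileRatio_of_one_le β le_rfl, one_rpow, mul_one]
  nlinarith [add_one_le_exp (-β)]

theorem tendsto_deriv_profile_div_nhdsGT_zero (β : ℝ) :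
    Tendsto (fun t => deriv (profile β) t / t) (𝓝[>] 0) (𝓝 1) := by
  have h : ContinuousAt (fun t : ℝ => profileRatio β (t ^ 2)) 0 :=
    (contDiffAt_profileRatio β (sq_nonneg 0)).continuousAt.comp (f := fun t : ℝ => t ^ 2)
      (continuous_pow 2).continuousAt
  have h1 := h.tendsto.mono_left (nhdsWithin_le_nhds (s := Ioi 0))
  rw [zero_pow two_ne_zero, profileRatio_zero] at h1
  exact h1.congr' (eventually_nhdsWithin_of_forall fun t ht =>
    (deriv_profile_div (ne_of_gt ht)).symm)

theorem strictAntiOn_deriv_profile_div {β : ℝ} (hβ0 : 0 < β) (hβ : β ≤ 1 / 8) :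
    StrictAntiOn (fun t => deriv (profile β) t / t) (Ioi 0) := by
  intro s hs t ht hst
  simp only [deriv_profile_div (ne_of_gt hs), deriv_profile_div (ne_of_gt ht)]
  exact strictAntiOn_profileRatio hβ0 hβ (sq_nonneg s) (sq_nonneg t)
    (pow_lt_pow_left₀ hst (le_of_lt hs) two_ne_zero)

theorem tendsto_deriv_profile_div_atTop {β : ℝ} (hβ0 : 0 < β) :
    Tendsto (fun t => deriv (profile β) t / t) atTop (𝓝 0) :=
  ((tendsto_profileRatio_atTop hβ0).comp (tendsto_pow_atTop two_ne_zero)).congr'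
    ((eventually_gt_atTop 0).mono fun _ ht => (deriv_profile_div (ne_of_gt ht)).symm)

theorem one_le_of_deriv_profile_div_le {β t : ℝ} (hβ0 : 0 < β) (hβ : β ≤ 1 / 8)
    (ht : 0 < t) (hle : deriv (profile β) t / t ≤ 1 - 4 * β) : 1 ≤ t := by
  by_contra! ht1
  have hsq : t ^ 2 < 1 := by nlinarith
  rw [deriv_profile_div (ne_of_gt ht)] at hle
  linarith [strictAntiOn_profileRatio hβ0 hβ (sq_nonneg t) (mem_Ici.2 zero_le_one) hsq,
    one_sub_four_mul_lt_profileRatio_one hβ0 (by linarith)]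

end ProfileFunction

open ProfileFunction

/-- Lemma 2.2: construction of the profile function `φ`. There is a threshold `ϑ₀ ∈ (0,1)`
such that for every `ϑ ∈ (0,ϑ₀)` there is a smooth `φ : ℝ → ℝ`, an exponent `α ∈ (1,2)` and a
constant `c ∈ (0,1)` with: `φ ≥ 0`, `φ(0) = φ'(0) = 0`, `φ''(0) = 1`, `φ'(t)/t → 1` as `t → 0⁺`,
`φ'(t) > 0` for `t > 0`, `t ↦ φ'(t)/t` strictly decreasing on `(0,∞)` with limit at `+∞`
strictly below `ϑ`, and `φ(t) = c·t^α` whenever `t > 0` and `φ'(t)/t ∈ [ϑ, 1-ϑ]`. -/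
theorem profile_function_exists :
    ∃ ϑ₀ : ℝ, 0 < ϑ₀ ∧ ϑ₀ < 1 ∧ ∀ ϑ : ℝ, 0 < ϑ → ϑ < ϑ₀ →
      ∃ (φ : ℝ → ℝ) (α c : ℝ),
        ContDiff ℝ (⊤ : ℕ∞) φ ∧ 1 < α ∧ α < 2 ∧ 0 < c ∧ c < 1 ∧
        (∀ t, 0 ≤ φ t) ∧ φ 0 = 0 ∧ deriv φ 0 = 0 ∧ deriv (deriv φ) 0 = 1 ∧
        Tendsto (fun t => deriv φ t / t) (nhdsWithin 0 (Ioi 0)) (nhds 1) ∧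
        (∀ t, 0 < t → 0 < deriv φ t) ∧
        StrictAntiOn (fun t => deriv φ t / t) (Ioi 0) ∧
        (∃ δ : ℝ, Tendsto (fun t => deriv φ t / t) atTop (nhds δ) ∧ δ < ϑ) ∧
        (∀ t, 0 < t → deriv φ t / t ∈ Icc ϑ (1 - ϑ) → φ t = c * t ^ α) := by
  refine ⟨1 / 2, by norm_num, by norm_num, fun ϑ hϑ0 hϑ => ?_⟩
  obtain ⟨β, rfl⟩ : ∃ β, ϑ = 4 * β := ⟨ϑ / 4, by ring⟩
  have hβ0 : 0 < β := by linarith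
  have hβ : β ≤ 1 / 8 := by linarith
  refine ⟨profile β, 2 - 2 * β, exp (-β) / 2, contDiff_profile β, by linarith, by linarith,
    by positivity, by linarith [exp_lt_one_iff.2 (neg_lt_zero.2 hβ0)], profile_nonneg β,
    by simp [profile, smoothedRpow], by simp [(hasDerivAt_profile β 0).deriv],
    deriv_deriv_profile_zero β, tendsto_deriv_profile_div_nhdsGT_zero β,
    fun t ht => deriv_profile_pos hβ0 hβ ht, strictAntiOn_deriv_profile_div hβ0 hβ,
    ⟨0, tendsto_deriv_profile_div_atTop hβ0, hϑ0⟩,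
    fun t ht hmem => profile_of_one_le β (one_le_of_deriv_profile_div_le hβ0 hβ ht hmem.2)⟩
end

section
/- Let j be a symmetric gauge function on ℝ^{2n}, Σ = j⁻¹(1), T > 0, a > 0, and let φ : [0,∞) → ℝ be C¹ with φ(0) = φ'(0) = 0, φ'(t) > 0 for t > 0, lim_{t→0⁺} φ'(t)/t = 1, and t ↦ φ'(t)/t strictly decreasing on (0,∞). Define H̃(x) = a·φ(j(x)) for x ∈ ℝ^{2n} (so H̃ is C¹ on ℝ^{2n} with ∇H̃(0) = 0 and C³ on ℝ^{2n}∖{0}). Then a C¹ map x : ℝ → ℝ^{2n} which is not identically zero satisfies ẋ(t) = J∇H̃(x(t)) and x(t + T/2) = −x(t) for all t ∈ ℝ if and only if there exist τ ∈ (0, aT), ρ > 0 with φ'(ρ)/ρ = τ/(aT), and a closed characteristic (τ, y) on Σ satisfying y(t + τ/2) = −y(t) for all t, such that x(t) = ρ·y(τ·t/T) for all t ∈ ℝ. In particular, nonzero T-antiperiodic solutions of ẋ = J∇H̃(x) are in one-to-one correspondence with symmetric closed characteristics of period τ < aT. -/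
/-!
Because `J` is skew, `H̃ = a·φ∘j` is constant along every solution, and `φ` is strictly increasing
on `[0, ∞)`, so a nonzero solution stays on one level set `j = ρ > 0`. The gradient of the
1-homogeneous `j` is 0-homogeneous, so on that level `J∇H̃ = a φ'(ρ) J∇j`, and `x(t) = ρ y(τt/T)`
turns one flow into the other exactly when `a φ'(ρ) = ρ τ / T`. Antiperiodicity passes through
the time change, and `φ'(ρ)/ρ < 1` (strict decrease from the limit `1` at `0⁺`) gives `τ < aT`.
At the origin, `φ'(0⁺) = 0` and `j = O(|x|)` make `H̃` differentiable with gradient `0`, which is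
what the conservation of `H̃` needs.
-/

open Set Filter

noncomputable section

/-- `ℝ^{2n}`, written with index type `Fin n ⊕ Fin n`. -/
abbrev Esp (n : ℕ) := EuclideanSpace ℝ (Fin n ⊕ Fin n)

/-- The standard symplectic matrix `J = [[0, −I_n],[I_n, 0]]`. -/
def Jmat (n : ℕ) : Matrix (Fin n ⊕ Fin n) (Fin n ⊕ Fin n) ℝ :=
  Matrix.fromBlocks 0 (-1) 1 0

/-- `J` as a continuous linear map on `ℝ^{2n}`. -/
def Jc (n : ℕ) : Esp n →L[ℝ] Esp n :=
  LinearMap.toContinuousLinearMap (Matrix.toEuclideanLin (Jmat n))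

/-- A symmetric gauge function on `ℝ^{2n}`: continuous, `C³` away from the origin,
positively homogeneous of degree one, positive away from `0`, and even. -/
def IsSymGauge (n : ℕ) (j : Esp n → ℝ) : Prop :=
  Continuous j ∧ ContDiffOn ℝ 3 j {(0 : Esp n)}ᶜ ∧
  (∀ l : ℝ, 0 ≤ l → ∀ x, j (l • x) = l * j x) ∧
  (∀ x, x ≠ 0 → 0 < j x) ∧ (∀ x, j (-x) = j x)

/-- A closed characteristic `(τ, y)` on `Σ = j⁻¹(1)`: `τ > 0`, `y` a non-constant `C¹`
solution of `ẏ = J ∇j(y)` lying on `Σ` and `τ`-periodic. -/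
def IsClosedCharacteristic (n : ℕ) (j : Esp n → ℝ) (τ : ℝ) (y : ℝ → Esp n) : Prop :=
  0 < τ ∧ ContDiff ℝ 1 y ∧ (∃ s t, y s ≠ y t) ∧ (∀ t, j (y t) = 1) ∧
  (∀ t, HasDerivAt y (Jc n (gradient j (y t))) t) ∧ (∀ t, y (t + τ) = y t)


open Asymptotics Function Topology
open scoped RealInnerProductSpace

theorem Jc_apply_inl (n : ℕ) (v : Esp n) (i : Fin n) : Jc n v (Sum.inl i) = -v (Sum.inr i) := by
  simp [Jc, Jmat, Matrix.mulVec, Matrix.fromBlocks, dotProduct,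
    Fintype.sum_sum_type, Matrix.one_apply]

theorem Jc_apply_inr (n : ℕ) (v : Esp n) (i : Fin n) : Jc n v (Sum.inr i) = v (Sum.inl i) := by
  simp [Jc, Jmat, Matrix.mulVec, Matrix.fromBlocks, dotProduct,
    Fintype.sum_sum_type, Matrix.one_apply]

theorem inner_Jc_self (n : ℕ) (v : Esp n) : ⟪v, Jc n v⟫ = 0 := by
  simp only [PiLp.inner_apply, RCLike.inner_apply, conj_trivial, Fintype.sum_sum_type,
    Jc_apply_inl, Jc_apply_inr, ← Finset.sum_add_distrib]
  exact Finset.sum_eq_zero fun i _ => by ring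

theorem hamiltonian_comp_eq_of_inner_self_eq_zero {E : Type*} [NormedAddCommGroup E]
    [InnerProductSpace ℝ E] [CompleteSpace E] {H : E → ℝ} (hH : Differentiable ℝ H)
    {A : E →L[ℝ] E} (hA : ∀ v, ⟪v, A v⟫ = 0) {x : ℝ → E}
    (hx : ∀ t, HasDerivAt x (A (gradient H (x t))) t) (s t : ℝ) : H (x s) = H (x t) := by
  have hderiv : ∀ t, HasDerivAt (H ∘ x) 0 t := fun t => by
    simpa [← inner_gradient_left, hA] using (hH (x t)).hasFDerivAt.comp_hasDerivAt t (hx t)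
  exact is_const_of_deriv_eq_zero (fun t => (hderiv t).differentiableAt)
    (fun t => (hderiv t).deriv) s t

theorem hasDerivAt_iff_of_eq_smul_comp_mul {E : Type*} [NormedAddCommGroup E] [NormedSpace ℝ E]
    {x y : ℝ → E} {ρ c : ℝ} (hρ : ρ ≠ 0) (hc : c ≠ 0) (hxy : ∀ t, x t = ρ • y (c * t))
    {v : E} {t : ℝ} : HasDerivAt x ((ρ * c) • v) t ↔ HasDerivAt y v (c * t) := by
  have hx : x = fun t => ρ • y (c * t) := funext hxy
  have hy : y = fun s => ρ⁻¹ • x (c⁻¹ * s) := funext fun s => by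
    simp [hxy, smul_smul, hρ, hc]
  constructor
  · intro h
    rw [← inv_mul_cancel_left₀ hc t] at h
    rw [hy]
    exact ((h.scomp (c * t) ((hasDerivAt_id (c * t)).const_mul c⁻¹)).const_smul ρ⁻¹).congr_deriv
      (by match_scalars; field_simp)
  · intro h
    rw [hx]
    exact ((h.scomp t ((hasDerivAt_id t).const_mul c)).const_smul ρ).congr_deriv
      (by simp [smul_smul])

def PosHomogeneous {E : Type*} [AddCommGroup E] [Module ℝ E] (f : E → ℝ) : Prop :=
  ∀ l : ℝ, 0 ≤ l → ∀ x, f (l • x) = l * f x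

namespace PosHomogeneous

variable {E : Type*} [NormedAddCommGroup E] [NormedSpace ℝ E] {f : E → ℝ}

theorem map_zero (hf : PosHomogeneous f) : f 0 = 0 := by
  simpa using hf 0 le_rfl 0

theorem isBigO_nhds_zero [ProperSpace E] (hf : PosHomogeneous f) (hc : Continuous f) :
    f =O[𝓝 0] fun z => z := by
  obtain ⟨C, hC⟩ := (isCompact_closedBall (0 : E) 1).exists_bound_of_continuousOn hc.continuousOn
  refine IsBigO.of_bound C (Eventually.of_forall fun z => ?_)
  rcases eq_or_ne z 0 with rfl | hz
  · simp [hf.map_zero]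
  have hnorm : 0 < ‖z‖ := norm_pos_iff.2 hz
  have hunit : ‖z‖⁻¹ • z ∈ Metric.closedBall (0 : E) 1 := by
    simp [norm_smul, hnorm.ne']
  calc ‖f z‖ = ‖z‖ * ‖f (‖z‖⁻¹ • z)‖ := by
        rw [hf _ (inv_nonneg.2 hnorm.le), norm_mul, norm_inv, norm_norm,
          mul_inv_cancel_left₀ hnorm.ne']
    _ ≤ ‖z‖ * C := by gcongr; exact hC _ hunit
    _ = C * ‖z‖ := mul_comm _ _

theorem hasFDerivAt_smul (hf : PosHomogeneous f) {f' : E →L[ℝ] ℝ} {z : E} {ρ : ℝ}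
    (hρ : 0 < ρ) (h : HasFDerivAt f f' z) : HasFDerivAt f f' (ρ • z) := by
  have hscale : HasFDerivAt (fun w : E => ρ⁻¹ • w) (ρ⁻¹ • ContinuousLinearMap.id ℝ E) (ρ • z) :=
    (hasFDerivAt_id _).const_smul ρ⁻¹
  rw [← inv_smul_smul₀ hρ.ne' z] at h
  refine (((h.comp (ρ • z) hscale).const_mul ρ).congr_fderiv ?_).congr_of_eventuallyEq
    (Eventually.of_forall fun w => ?_)
  · ext v
    simp [hρ.ne']
  · simp [← hf ρ hρ.le, smul_inv_smul₀ hρ.ne']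

theorem gradient_smul {F : Type*} [NormedAddCommGroup F] [InnerProductSpace ℝ F] [CompleteSpace F]
    {f : F → ℝ} (hf : PosHomogeneous f) {z : F} {ρ : ℝ} (hρ : 0 < ρ)
    (h : DifferentiableAt ℝ f z) : gradient f (ρ • z) = gradient f z := by
  simp only [gradient, (hf.hasFDerivAt_smul hρ h.hasFDerivAt).fderiv]

end PosHomogeneous

theorem StrictAntiOn.lt_of_tendsto_nhdsGT {g : ℝ → ℝ} {b L ρ : ℝ} (hg : StrictAntiOn g (Ioi b))
    (hlim : Tendsto g (𝓝[>] b) (𝓝 L)) (hρ : b < ρ) : g ρ < L := by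
  obtain ⟨m, hbm, hmρ⟩ := exists_between hρ
  have hm_le : g m ≤ L := ge_of_tendsto hlim <| by
    filter_upwards [Ioo_mem_nhdsGT hbm] with s hs
    exact (hg hs.1 hbm hs.2).le
  exact (hg hbm (hbm.trans hmρ) hmρ).trans_le hm_le

theorem hasDerivWithinAt_Ici_of_tendsto_deriv_div {φ : ℝ → ℝ} {b L : ℝ}
    (hc : ContinuousWithinAt φ (Ioi b) b) (hd : DifferentiableOn ℝ φ (Ioi b))
    (hlim : Tendsto (fun t => deriv φ t / (t - b)) (𝓝[>] b) (𝓝 L)) :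
    HasDerivWithinAt φ 0 (Ici b) b := by
  refine hasDerivWithinAt_Ici_of_tendsto_deriv hd hc self_mem_nhdsWithin ?_
  have hsub : Tendsto (fun t => t - b) (𝓝[>] b) (𝓝 0) := by
    simpa using (tendsto_id.sub_const b).mono_left (nhdsWithin_le_nhds (a := b))
  have hprod := hlim.mul hsub
  rw [mul_zero] at hprod
  refine hprod.congr' ?_
  filter_upwards [self_mem_nhdsWithin] with t (ht : b < t)
  field_simp [sub_ne_zero.2 ht.ne']

theorem hasFDerivAt_comp_of_isBigO {E : Type*} [NormedAddCommGroup E] [NormedSpace ℝ E]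
    {g : ℝ → ℝ} {f : E → ℝ} (hg : HasDerivWithinAt g 0 (Ici 0) 0) (hf0 : f 0 = 0)
    (hf : ContinuousAt f 0) (hf_nonneg : ∀ w, 0 ≤ f w) (hO : f =O[𝓝 0] fun w => w) :
    HasFDerivAt (fun w => g (f w)) (0 : E →L[ℝ] ℝ) 0 := by
  have htend : Tendsto f (𝓝 0) (𝓝[Ici 0] 0) :=
    tendsto_nhdsWithin_iff.2 ⟨hf0 ▸ hf, Eventually.of_forall hf_nonneg⟩
  rw [hasFDerivAt_iff_isLittleO_nhds_zero]
  have := hg.isLittleO.comp_tendsto htend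
  simp only [sub_zero, smul_zero, Function.comp_def] at this
  simpa [hf0] using this.trans_isBigO hO

namespace IsSymGauge

variable {n : ℕ} {j : Esp n → ℝ}

theorem posHomogeneous (hj : IsSymGauge n j) : PosHomogeneous j := hj.2.2.1

theorem map_eq_zero_iff (hj : IsSymGauge n j) {z : Esp n} : j z = 0 ↔ z = 0 :=
  ⟨fun h => by_contra fun hz => (hj.2.2.2.1 z hz).ne' h, fun h => h ▸ hj.posHomogeneous.map_zero⟩

theorem nonneg (hj : IsSymGauge n j) (z : Esp n) : 0 ≤ j z := by
  rcases eq_or_ne z 0 with rfl | hz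
  · exact hj.posHomogeneous.map_zero.ge
  · exact (hj.2.2.2.1 z hz).le

theorem differentiableAt (hj : IsSymGauge n j) {z : Esp n} (hz : z ≠ 0) :
    DifferentiableAt ℝ j z :=
  (hj.2.1.contDiffAt (isOpen_compl_singleton.mem_nhds hz)).differentiableAt (by norm_num)

theorem differentiable_comp (hj : IsSymGauge n j) {g : ℝ → ℝ}
    (hg₀ : HasDerivWithinAt g 0 (Ici 0) 0) (hg : ∀ s, 0 < s → DifferentiableAt ℝ g s) :
    Differentiable ℝ fun z => g (j z) := by
  intro z
  rcases eq_or_ne z 0 with rfl | hz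
  · exact (hasFDerivAt_comp_of_isBigO hg₀ hj.posHomogeneous.map_zero hj.1.continuousAt hj.nonneg
      (hj.posHomogeneous.isBigO_nhds_zero hj.1)).differentiableAt
  · exact (hg _ (hj.2.2.2.1 z hz)).comp z (hj.differentiableAt hz)

theorem gradient_comp_smul (hj : IsSymGauge n j) {g : ℝ → ℝ} {g' ρ : ℝ} {z : Esp n}
    (hz : j z = 1) (hρ : 0 < ρ) (hg : HasDerivAt g g' ρ) :
    gradient (fun w => g (j w)) (ρ • z) = g' • gradient j z := by
  have hz0 : z ≠ 0 := fun h => by simp [hj.map_eq_zero_iff.2 h] at hz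
  have hj_smul : j (ρ • z) = ρ := by rw [hj.posHomogeneous ρ hρ.le, hz, mul_one]
  have hdiff := hj.differentiableAt (smul_ne_zero hρ.ne' hz0)
  rw [← hj.posHomogeneous.gradient_smul hρ (hj.differentiableAt hz0)]
  refine HasGradientAt.gradient ?_
  rw [hasGradientAt_iff_hasFDerivAt, map_smul, toDual_gradient]
  exact (hj_smul ▸ hg).comp_hasFDerivAt _ hdiff.hasFDerivAt

end IsSymGauge

section HamiltonianFlow

variable {n : ℕ} {j : Esp n → ℝ} {g : ℝ → ℝ}

theorem exists_pos_forall_gauge_eq_of_hamiltonian_flow (hj : IsSymGauge n j)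
    (hgd : Differentiable ℝ fun z => g (j z)) (hg : InjOn g (Ici 0)) {x : ℝ → Esp n}
    (hsol : ∀ t, HasDerivAt x (Jc n (gradient (fun z => g (j z)) (x t))) t)
    (hxne : ∃ t, x t ≠ 0) : ∃ ρ > 0, ∀ t, j (x t) = ρ := by
  obtain ⟨t₀, ht₀⟩ := hxne
  refine ⟨j (x t₀), (hj.nonneg _).lt_of_ne' (hj.map_eq_zero_iff.not.2 ht₀), fun t => ?_⟩
  exact hg (hj.nonneg _) (hj.nonneg _)
    (hamiltonian_comp_eq_of_inner_self_eq_zero hgd (inner_Jc_self n) hsol t t₀)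

theorem hamiltonian_flow_iff_characteristic_flow (hj : IsSymGauge n j) {x y : ℝ → Esp n}
    {ρ c : ℝ} (hρ : 0 < ρ) (hc : 0 < c) (hg : HasDerivAt g (ρ * c) ρ) (hy : ∀ s, j (y s) = 1)
    (hxy : ∀ t, x t = ρ • y (c * t)) :
    (∀ t, HasDerivAt x (Jc n (gradient (fun z => g (j z)) (x t))) t) ↔
      ∀ s, HasDerivAt y (Jc n (gradient j (y s))) s := by
  have hgrad : ∀ t, Jc n (gradient (fun z => g (j z)) (x t)) =
      (ρ * c) • Jc n (gradient j (y (c * t))) := fun t => by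
    rw [hxy, hj.gradient_comp_smul (hy _) hρ hg, map_smul]
  simp_rw [hgrad, hasDerivAt_iff_of_eq_smul_comp_mul hρ.ne' hc.ne' hxy]
  refine ⟨fun h s => ?_, fun h t => h _⟩
  simpa [mul_div_cancel₀ _ hc.ne'] using h (s / c)

theorem exists_isClosedCharacteristic_of_hamiltonian_flow (hj : IsSymGauge n j)
    {x : ℝ → Esp n} {ρ τ T : ℝ} (hρ : 0 < ρ) (hτ : 0 < τ) (hT : 0 < T)
    (hg : HasDerivAt g (ρ * (τ / T)) ρ) (hx : ContDiff ℝ 1 x) (hjx : ∀ t, j (x t) = ρ)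
    (hsol : ∀ t, HasDerivAt x (Jc n (gradient (fun z => g (j z)) (x t))) t)
    (hanti : Antiperiodic x (T / 2)) :
    ∃ y, IsClosedCharacteristic n j τ y ∧ Antiperiodic y (τ / 2) ∧
      ∀ t, x t = ρ • y (τ * t / T) := by
  set y : ℝ → Esp n := fun s => ρ⁻¹ • x (T / τ * s)
  have hxy : ∀ t, x t = ρ • y (τ / T * t) := fun t => by
    simp only [y, smul_smul, mul_inv_cancel₀ hρ.ne', one_smul]
    congr 1
    field_simp
  have hy : ∀ s, j (y s) = 1 := fun s => by
    simp [y, hj.posHomogeneous _ (inv_nonneg.2 hρ.le), hjx, hρ.ne']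
  have hyanti : Antiperiodic y (τ / 2) := fun s => by
    simp only [y]
    rw [show T / τ * (s + τ / 2) = T / τ * s + T / 2 by field_simp, hanti, smul_neg]
  have hy0 : y 0 ≠ 0 := fun h => by simpa [h, hj.posHomogeneous.map_zero] using hy 0
  refine ⟨y, ⟨hτ, ?_, ⟨τ / 2, 0, ?_⟩, hy, ?_, fun t => ?_⟩, hyanti, fun t => ?_⟩
  · exact (hx.comp (contDiff_const.mul contDiff_id)).const_smul ρ⁻¹
  · rw [hyanti.eq]
    rw [ne_eq, neg_eq_iff_add_eq_zero, ← two_smul ℝ, smul_eq_zero]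
    simp [hy0]
  · exact (hamiltonian_flow_iff_characteristic_flow hj hρ (div_pos hτ hT) hg hy hxy).1 hsol
  · simpa [mul_div_cancel₀] using hyanti.periodic_two_mul t
  · rw [hxy, div_mul_eq_mul_div]

theorem hamiltonian_flow_of_isClosedCharacteristic (hj : IsSymGauge n j) {y : ℝ → Esp n}
    {ρ τ T : ℝ} (hρ : 0 < ρ) (hT : 0 < T) (hg : HasDerivAt g (ρ * (τ / T)) ρ)
    (hy : IsClosedCharacteristic n j τ y) (hyanti : Antiperiodic y (τ / 2)) :
    (∀ t, HasDerivAt (fun t => ρ • y (τ * t / T))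
      (Jc n (gradient (fun z => g (j z)) (ρ • y (τ * t / T)))) t) ∧
      Antiperiodic (fun t => ρ • y (τ * t / T)) (T / 2) := by
  refine ⟨(hamiltonian_flow_iff_characteristic_flow hj hρ (div_pos hy.1 hT) hg hy.2.2.2.1
    fun t => by rw [div_mul_eq_mul_div]).2 hy.2.2.2.2.1, fun t => ?_⟩
  simp only
  rw [show τ * (t + T / 2) / T = τ * t / T + τ / 2 by field_simp, hyanti, smul_neg]

end HamiltonianFlow

theorem antiperiodic_solutions_correspondence_general (n : ℕ)
    (j : Esp n → ℝ) (hj : IsSymGauge n j)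
    (T a : ℝ) (hT : 0 < T) (ha : 0 < a)
    (φ : ℝ → ℝ) (hφC1 : ContDiffOn ℝ 1 φ (Ici 0))
    (hφpos : ∀ t, 0 < t → 0 < deriv φ t)
    (hφlim : Tendsto (fun t => deriv φ t / t) (nhdsWithin 0 (Ioi 0)) (nhds 1))
    (hφanti : StrictAntiOn (fun t => deriv φ t / t) (Ioi 0))
    (x : ℝ → Esp n) (hx : ContDiff ℝ 1 x) (hxne : ∃ t, x t ≠ 0) :
    ((∀ t, deriv x t = Jc n (gradient (fun z => a * φ (j z)) (x t))) ∧
      (∀ t, x (t + T / 2) = -x t)) ↔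
    (∃ (τ ρ : ℝ) (y : ℝ → Esp n), 0 < τ ∧ τ < a * T ∧ 0 < ρ ∧
      deriv φ ρ / ρ = τ / (a * T) ∧
      IsClosedCharacteristic n j τ y ∧ (∀ t, y (t + τ / 2) = -y t) ∧
      (∀ t, x t = ρ • y (τ * t / T))) := by
  have hφd : ∀ s, 0 < s → HasDerivAt φ (deriv φ s) s := fun s hs =>
    ((hφC1.differentiableOn one_ne_zero s hs.le).differentiableAt (Ici_mem_nhds hs)).hasDerivAt
  have hφ₀ : HasDerivWithinAt φ 0 (Ici 0) 0 := hasDerivWithinAt_Ici_of_tendsto_deriv_div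
    ((hφC1.continuousOn.continuousWithinAt self_mem_Ici).mono Ioi_subset_Ici_self)
    (fun s hs => (hφd s hs).differentiableAt.differentiableWithinAt) (by simpa using hφlim)
  have hH : Differentiable ℝ fun z => a * φ (j z) :=
    hj.differentiable_comp (g := fun s => a * φ s) (by simpa using hφ₀.const_mul a)
      fun s hs => ((hφd s hs).const_mul a).differentiableAt
  have hinj : InjOn (fun s => a * φ s) (Ici 0) := fun s hs t ht hst =>
    (strictMonoOn_of_deriv_pos (convex_Ici 0) hφC1.continuousOn (by simpa using hφpos)).injOn
      hs ht (mul_left_cancel₀ ha.ne' hst)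
  have hg : ∀ ρ τ, 0 < ρ → deriv φ ρ / ρ = τ / (a * T) →
      HasDerivAt (fun s => a * φ s) (ρ * (τ / T)) ρ := fun ρ τ hρ hratio =>
    ((hφd ρ hρ).const_mul a).congr_deriv (by field_simp at hratio ⊢; linarith)
  constructor
  · rintro ⟨hsol, hanti⟩
    have hsol' : ∀ t, HasDerivAt x (Jc n (gradient (fun z => a * φ (j z)) (x t))) t := fun t =>
      hsol t ▸ (hx.differentiable one_ne_zero t).hasDerivAt
    obtain ⟨ρ, hρ, hjx⟩ := exists_pos_forall_gauge_eq_of_hamiltonian_flow hj hH hinj hsol' hxne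
    have hratio_pos : 0 < deriv φ ρ / ρ := div_pos (hφpos ρ hρ) hρ
    have hratio_lt : deriv φ ρ / ρ < 1 := hφanti.lt_of_tendsto_nhdsGT hφlim hρ
    set τ := a * T * (deriv φ ρ / ρ)
    have hτ : 0 < τ := by positivity
    have hratio : deriv φ ρ / ρ = τ / (a * T) := (mul_div_cancel_left₀ _ (by positivity)).symm
    obtain ⟨y, hy⟩ := exists_isClosedCharacteristic_of_hamiltonian_flow hj hρ hτ hT
      (hg ρ τ hρ hratio) hx hjx hsol' hanti
    exact ⟨τ, ρ, y, hτ, mul_lt_of_lt_one_right (by positivity) hratio_lt, hρ, hratio, hy⟩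
  · rintro ⟨τ, ρ, y, -, -, hρ, hratio, hy, hyanti, hxy⟩
    obtain rfl : x = fun t => ρ • y (τ * t / T) := funext hxy
    obtain ⟨hsol, hanti⟩ :=
      hamiltonian_flow_of_isClosedCharacteristic hj hρ hT (hg ρ τ hρ hratio) hy hyanti
    exact ⟨fun t => (hsol t).deriv, hanti⟩

/-- Lemma 2.3: nonzero `T`-antiperiodic solutions of `ẋ = J ∇H̃(x)`, `H̃ = a·φ∘j`, are
exactly the curves `x(t) = ρ·y(τt/T)` with `φ'(ρ)/ρ = τ/(aT)` coming from symmetric closed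
characteristics `(τ, y)` on `Σ` with `τ < aT`. -/
theorem antiperiodic_solutions_correspondence (n : ℕ) (hn : 0 < n)
    (j : Esp n → ℝ) (hj : IsSymGauge n j)
    (T a : ℝ) (hT : 0 < T) (ha : 0 < a)
    (φ : ℝ → ℝ) (hφC1 : ContDiffOn ℝ 1 φ (Ici 0))
    (hφ0 : φ 0 = 0) (hφ'0 : deriv φ 0 = 0)
    (hφpos : ∀ t, 0 < t → 0 < deriv φ t)
    (hφlim : Tendsto (fun t => deriv φ t / t) (nhdsWithin 0 (Ioi 0)) (nhds 1))
    (hφanti : StrictAntiOn (fun t => deriv φ t / t) (Ioi 0))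
    (x : ℝ → Esp n) (hx : ContDiff ℝ 1 x) (hxne : ∃ t, x t ≠ 0) :
    ((∀ t, deriv x t = Jc n (gradient (fun z => a * φ (j z)) (x t))) ∧
      (∀ t, x (t + T / 2) = -x t)) ↔
    (∃ (τ ρ : ℝ) (y : ℝ → Esp n), 0 < τ ∧ τ < a * T ∧ 0 < ρ ∧
      deriv φ ρ / ρ = τ / (a * T) ∧
      IsClosedCharacteristic n j τ y ∧ (∀ t, y (t + τ / 2) = -y t) ∧
      (∀ t, x t = ρ • y (τ * t / T))) :=
  antiperiodic_solutions_correspondence_general n j hj T a hT ha φ hφC1 hφpos hφlim hφanti x hx hxne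

end
end

section
/- Let m, u : ℤ → ℝ be functions with u(i) ≥ 0 for all i ∈ ℤ, and suppose that for every i ∈ ℤ one has m(i) − e(i) = u(i) + u(i − 1), where e(i) = 1 if i ≥ 0 and i is even, and e(i) = 0 otherwise. If p is a negative integer such that m(q) = 0 for all integers q < p, then m(p + 1) ≥ m(p). -/
/-! Vanishing of `m` and `e` at `p - 1` forces `u (p - 1) + u (p - 2) = 0`, hence `u (p - 1) = 0`
by nonnegativity, so `m p = u p`; and `u p` is one of the nonnegative summands of
`m (p + 1) = e (p + 1) + u (p + 1) + u p`. -/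

theorem le_succ_of_sub_eq_add_pred {m u e : ℤ → ℝ} (hu : ∀ i, 0 ≤ u i)
    (h : ∀ i, m i - e i = u i + u (i - 1)) {p : ℤ} (hm : m (p - 1) = 0)
    (he_pred : e (p - 1) = 0) (he : e p = 0) (he_succ : 0 ≤ e (p + 1)) :
    m p ≤ m (p + 1) := by
  have hu_pred : u (p - 1) = 0 := by
    have hsum := h (p - 1)
    rw [hm, he_pred] at hsum
    exact ((add_eq_zero_iff_of_nonneg (hu _) (hu _)).1 (by linarith)).1
  have hp := h p
  have hp_succ := h (p + 1)
  rw [add_sub_cancel_right] at hp_succ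
  calc m p = u p := by linarith
    _ ≤ m (p + 1) := by linarith [hu (p + 1)]

/-- Coefficient-wise form of `M(t) − 1/(1−t²) = (1+t)U(t)` (equations (5.14)/(4.18)) and
the resulting inequality (5.15): if `m(i) − e(i) = u(i) + u(i−1)` with `u ≥ 0`, where
`e(i) = 1` for `i ≥ 0` even and `e(i) = 0` otherwise, and `m` vanishes below a negative
integer `p`, then `m(p+1) ≥ m(p)`. -/
theorem morse_series_coefficient_inequality (m u : ℤ → ℝ)
    (hu : ∀ i : ℤ, 0 ≤ u i)
    (h : ∀ i : ℤ, m i - (if 0 ≤ i ∧ i % 2 = 0 then (1 : ℝ) else 0) = u i + u (i - 1))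
    (p : ℤ) (hp : p < 0) (hm : ∀ q : ℤ, q < p → m q = 0) :
    m p ≤ m (p + 1) := by
  refine le_succ_of_sub_eq_add_pred hu h (hm _ (by omega)) ?_ ?_ ?_
  · exact if_neg (by omega)
  · exact if_neg (by omega)
  · positivity
end

section
/- Let α be a nonzero real number, d ≥ 0, K̄ a positive integer, m a nonnegative integer, and let i : ℕ → ℝ satisfy |i(p) − p·α| ≤ d for all p ≥ 1. Then for every h ∈ ℝ the set {s ∈ ℕ∪{0} : i(s·K̄ + m) = h} (where s·K̄ + m ≥ 1) is finite, with cardinality at most 2d/(K̄·|α|) + 2. -/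
/-!
If `i p = i q = h`, then `p α` and `q α` both lie within `d` of `h`, so `|p - q| |α| ≤ 2d`.
Along the progression `p = s K̄ + m` consecutive terms of `p α` are `K̄ |α|` apart, hence a
level set contains at most `2d / (K̄ |α|) + 1` of its points.
-/

theorem finite_and_ncard_le_of_forall_dist_le {S : Set ℕ} {D : ℝ} (hD : 0 ≤ D)
    (hS : ∀ s ∈ S, ∀ t ∈ S, dist s t ≤ D) : S.Finite ∧ (S.ncard : ℝ) ≤ D + 1 := by
  rcases S.eq_empty_or_nonempty with rfl | hne
  · simp only [Set.finite_empty, Set.ncard_empty, Nat.cast_zero, true_and]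
    linarith
  set N := ⌊D⌋₊
  have hsub : S ⊆ Set.Icc (sInf S) (sInf S + N) := by
    intro t ht
    have hle : sInf S ≤ t := Nat.sInf_le ht
    have hdist : ((t - sInf S : ℕ) : ℝ) ≤ D := by
      rw [Nat.cast_sub hle, ← abs_of_nonneg (sub_nonneg.mpr (Nat.cast_le.mpr hle)),
        ← Nat.dist_eq]
      exact hS t ht _ (Nat.sInf_mem hne)
    have := Nat.le_floor hdist
    exact ⟨hle, by omega⟩
  have hcard : S.ncard ≤ N + 1 := by
    calc S.ncard ≤ (Set.Icc (sInf S) (sInf S + N)).ncard := Set.ncard_le_ncard hsub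
      _ = N + 1 := by simp; omega
  refine ⟨(Set.finite_Icc _ _).subset hsub, ?_⟩
  calc (S.ncard : ℝ) ≤ N + 1 := by exact_mod_cast hcard
    _ ≤ D + 1 := by gcongr; exact Nat.floor_le hD

theorem abs_sub_mul_le_of_abs_sub_mul_le {a x y α d : ℝ}
    (hx : |a - x * α| ≤ d) (hy : |a - y * α| ≤ d) : |x - y| * |α| ≤ 2 * d :=
  calc |x - y| * |α| = |(a - y * α) - (a - x * α)| := by rw [← abs_mul]; ring_nf
    _ ≤ |a - y * α| + |a - x * α| := abs_sub _ _
    _ ≤ 2 * d := by linarith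

theorem dist_mul_add_mul_add (s t k m : ℕ) :
    dist (s * k + m) (t * k + m) = dist s t * k := by
  simp only [Nat.dist_eq, Nat.cast_add, Nat.cast_mul]
  rw [add_sub_add_right_eq_sub, ← sub_mul, abs_mul, Nat.abs_cast]

/-- Abstract counting estimate behind inequality (4.12): if `|i(p) − p·α| ≤ d` for all
`p ≥ 1` with `α ≠ 0`, then for every `h` the set of `s ∈ ℕ∪{0}` with `s·K̄ + m ≥ 1` and
`i(s·K̄ + m) = h` is finite, of cardinality at most `2d/(K̄|α|) + 2`. -/
theorem index_level_set_count (α : ℝ) (hα : α ≠ 0) (d : ℝ) (hd : 0 ≤ d)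
    (Kbar : ℕ) (hK : 0 < Kbar) (m : ℕ)
    (i : ℕ → ℝ) (hi : ∀ p : ℕ, 1 ≤ p → |i p - (p : ℝ) * α| ≤ d) :
    ∀ h : ℝ,
      {s : ℕ | 1 ≤ s * Kbar + m ∧ i (s * Kbar + m) = h}.Finite ∧
      ({s : ℕ | 1 ≤ s * Kbar + m ∧ i (s * Kbar + m) = h}.ncard : ℝ)
        ≤ 2 * d / ((Kbar : ℝ) * |α|) + 2 := by
  intro h
  set S := {s : ℕ | 1 ≤ s * Kbar + m ∧ i (s * Kbar + m) = h}
  have hc : 0 < (Kbar : ℝ) * |α| := by positivity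
  have hdist : ∀ s ∈ S, ∀ t ∈ S, dist s t ≤ 2 * d / ((Kbar : ℝ) * |α|) := by
    rintro s ⟨hs, rfl⟩ t ⟨ht, hst⟩
    have hdiff := abs_sub_mul_le_of_abs_sub_mul_le (hi _ hs) (hst ▸ hi _ ht)
    rw [← Nat.dist_eq, dist_mul_add_mul_add, mul_assoc] at hdiff
    exact (le_div_iff₀ hc).mpr hdiff
  obtain ⟨hfin, hcard⟩ :=
    finite_and_ncard_le_of_forall_dist_le (div_nonneg (mul_nonneg zero_le_two hd) hc.le) hdist
  exact ⟨hfin, by linarith⟩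
end
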